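/- Let d ≥ 1. For any point p ∈ S^d, ∫_{−1}^{1} ( σ(C(p,t)) )² dt = 1 − C_d ∫_{S^d} ‖x − p‖ dσ(x), where ‖·‖ is the Euclidean norm in ℝ^{d+1}. -/

import Mathlib

open MeasureTheory Metric Set
open scoped RealInnerProductSpace ENNReal

noncomputable section

/-- The unit sphere `S^d` in `ℝ^(d+1)`, realized as `EuclideanSpace ℝ (Fin (d+1))`. -/
abbrev Sphere (d : ℕ) : Type _ := Metric.sphere (0 : EuclideanSpace ℝ (Fin (d + 1))) 1

/-- The uniform probability measure `σ` on `S^d` (the normalized surface measure):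
the normalization of the cone (surface) measure associated to the Lebesgue measure. -/
def sphereMeasure (d : ℕ) : Measure (Sphere d) :=
  ((volume : Measure (EuclideanSpace ℝ (Fin (d + 1)))).toSphere univ)⁻¹ •
    (volume : Measure (EuclideanSpace ℝ (Fin (d + 1)))).toSphere

/-- Euclidean inner product `x · y` of two points on the sphere. -/
def ip {d : ℕ} (x y : Sphere d) : ℝ :=
  ⟪(x : EuclideanSpace ℝ (Fin (d + 1))), (y : EuclideanSpace ℝ (Fin (d + 1)))⟫

/-- Euclidean distance `‖x - y‖` between two points on the sphere. -/
def eucl {d : ℕ} (x y : Sphere d) : ℝ :=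
  ‖(x : EuclideanSpace ℝ (Fin (d + 1))) - (y : EuclideanSpace ℝ (Fin (d + 1)))‖

/-- The normalized geodesic distance `d(x,y) = arccos(x·y)/π` on the sphere. -/
def geo {d : ℕ} (x y : Sphere d) : ℝ := Real.arccos (ip x y) / Real.pi

/-- The open spherical cap `C(x,t) = {z ∈ S^d : z · x > t}`. -/
def cap {d : ℕ} (x : Sphere d) (t : ℝ) : Set (Sphere d) := {z | t < ip x z}

/-- The open hemisphere `H(x) = {z ∈ S^d : z · x > 0}`. -/
def hemi {d : ℕ} (x : Sphere d) : Set (Sphere d) := {z | 0 < ip x z}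

/-!
Since `σ(C(p,t))² = (σ ⊗ σ){(x, y) : t < min (p·x) (p·y)}`, integrating in `t` first gives
`∫∫ (min (p·x) (p·y) + 1) = 1 - ½ ∫∫ |p·x - p·y|`, because `p·x` has mean zero by antipodal
symmetry. By rotation invariance, `∫∫ |⟨x - y, p⟩| dσ(x) dσ(y)` does not depend on `p`, so it may
be averaged over `p ∈ S^d` too; integrating in `p` first, `∫ |⟨v, r⟩| dσ(r) = 2 C_d ‖v‖` for
`v = x - y`, and rotation invariance once more turns `∫∫ ‖x - y‖` into `∫ ‖x - p‖`.
-/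

open scoped Pointwise

namespace LinearIsometryEquiv

variable {E : Type*} [NormedAddCommGroup E] [NormedSpace ℝ E]

def sphereHomeomorph (e : E ≃ₗᵢ[ℝ] E) : sphere (0 : E) 1 ≃ₜ sphere (0 : E) 1 :=
  e.toHomeomorph.subtype fun x => by simp

@[simp]
theorem coe_sphereHomeomorph_apply (e : E ≃ₗᵢ[ℝ] E) (x : sphere (0 : E) 1) :
    (e.sphereHomeomorph x : E) = e x := rfl

theorem Ioo_smul_image_coe_preimage_sphereHomeomorph (e : E ≃ₗᵢ[ℝ] E)
    (s : Set (sphere (0 : E) 1)) :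
    Ioo (0 : ℝ) 1 • ((↑) '' (e.sphereHomeomorph ⁻¹' s) : Set E)
      = e ⁻¹' (Ioo (0 : ℝ) 1 • ((↑) '' s)) := by
  ext v
  simp only [mem_smul, mem_image, mem_preimage]
  constructor
  · rintro ⟨c, hc, _, ⟨x, hx, rfl⟩, rfl⟩
    exact ⟨c, hc, _, ⟨_, hx, rfl⟩, by simp⟩
  · rintro ⟨c, hc, _, ⟨z, hz, rfl⟩, hv⟩
    refine ⟨c, hc, _, ⟨e.sphereHomeomorph.symm z, by simpa using hz, rfl⟩, e.injective ?_⟩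
    simpa [sphereHomeomorph] using hv

theorem measurePreserving_sphereHomeomorph [MeasurableSpace E] [BorelSpace E] {μ : Measure E}
    (e : E ≃ₗᵢ[ℝ] E) (he : MeasurePreserving e μ μ) :
    MeasurePreserving e.sphereHomeomorph μ.toSphere μ.toSphere := by
  refine ⟨e.sphereHomeomorph.measurable, Measure.ext fun s hs => ?_⟩
  rw [Measure.map_apply e.sphereHomeomorph.measurable hs,
    Measure.toSphere_apply' _ (hs.preimage e.sphereHomeomorph.measurable),
    Measure.toSphere_apply' _ hs, Ioo_smul_image_coe_preimage_sphereHomeomorph,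
    he.measure_preimage_emb e.toHomeomorph.measurableEmbedding]

end LinearIsometryEquiv

section LayerCake

variable {α : Type*} [MeasurableSpace α] {μ : Measure α} {f : α → ℝ} {a b : ℝ}

theorem integral_measureReal_setOf_lt [IsFiniteMeasure μ] (hf : Measurable f) (hab : a ≤ b)
    (hfab : ∀ x, f x ∈ Icc a b) :
    ∫ t in a..b, μ.real {x | t < f x} = ∫ x, (f x - a) ∂μ := by
  set S : Set (ℝ × α) := {p | p.1 < f p.2}
  have hS : MeasurableSet S := measurableSet_lt measurable_fst (hf.comp measurable_snd)
  have : IsFiniteMeasure (volume.restrict (Ioo a b)) := ⟨by simp⟩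
  have hint : Integrable (Function.uncurry fun t x => S.indicator (1 : ℝ × α → ℝ) (t, x))
      ((volume.restrict (Ioo a b)).prod μ) :=
    (integrable_const (1 : ℝ)).indicator hS
  rw [intervalIntegral.integral_of_le hab, integral_Ioc_eq_integral_Ioo]
  calc ∫ t in Ioo a b, μ.real {x | t < f x}
      = ∫ t in Ioo a b, ∫ x, S.indicator 1 (t, x) ∂μ := by
        congr! 2 with t
        exact (integral_indicator_one (hS.preimage measurable_prodMk_left)).symm
    _ = ∫ x, (∫ t in Ioo a b, S.indicator 1 (t, x)) ∂μ := integral_integral_swap hint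
    _ = ∫ x, (f x - a) ∂μ := by
        congr! 2 with x
        change ∫ t in Ioo a b, (Iio (f x)).indicator 1 t = _
        rw [integral_indicator_one measurableSet_Iio, measureReal_restrict_apply measurableSet_Iio,
          Iio_inter_Ioo, min_eq_left (hfab x).2, Real.volume_real_Ioo_of_le (hfab x).1]

theorem measureReal_setOf_lt_sq [SFinite μ] (t : ℝ) :
    μ.real {x | t < f x} ^ 2 = (μ.prod μ).real {z | t < min (f z.1) (f z.2)} := by
  have : {z : α × α | t < min (f z.1) (f z.2)} = {x | t < f x} ×ˢ {x | t < f x} := by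
    ext z; simp
  rw [this, measureReal_prod_prod, sq]

theorem integral_measureReal_setOf_lt_sq [IsProbabilityMeasure μ] (hf : Measurable f)
    (hab : a ≤ b) (hfab : ∀ x, f x ∈ Icc a b) :
    ∫ t in a..b, μ.real {x | t < f x} ^ 2
      = ∫ x, f x ∂μ - a - 1 / 2 * ∫ z, |f z.1 - f z.2| ∂(μ.prod μ) := by
  have hmin : ∀ u v : ℝ, min u v = (u + v - |u - v|) / 2 := fun u v => by
    linarith [max_sub_min_eq_abs' u v, min_add_max u v]
  have hfi : Integrable f μ := .of_bound hf.aestronglyMeasurable _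
    (ae_of_all _ fun x => abs_le_max_abs_abs (hfab x).1 (hfab x).2)
  have hf1 : Integrable (fun z : α × α => f z.1) (μ.prod μ) := hfi.comp_fst μ
  have hf2 : Integrable (fun z : α × α => f z.2) (μ.prod μ) := hfi.comp_snd μ
  have hadd : Integrable (fun z : α × α => f z.1 + f z.2) (μ.prod μ) := hf1.add hf2
  have habs : Integrable (fun z : α × α => |f z.1 - f z.2|) (μ.prod μ) := (hf1.sub hf2).abs
  calc ∫ t in a..b, μ.real {x | t < f x} ^ 2
      = ∫ t in a..b, (μ.prod μ).real {z | t < min (f z.1) (f z.2)} := by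
        simp_rw [measureReal_setOf_lt_sq]
    _ = ∫ z, (min (f z.1) (f z.2) - a) ∂(μ.prod μ) :=
        integral_measureReal_setOf_lt ((hf.comp measurable_fst).min (hf.comp measurable_snd)) hab
          fun z => ⟨le_min (hfab _).1 (hfab _).1, (min_le_left _ _).trans (hfab _).2⟩
    _ = ∫ z, ((f z.1 + f z.2 - |f z.1 - f z.2|) / 2 - a) ∂(μ.prod μ) := by
        simp_rw [hmin]
    _ = ∫ x, f x ∂μ - a - 1 / 2 * ∫ z, |f z.1 - f z.2| ∂(μ.prod μ) := by
        rw [integral_sub ?_ (integrable_const a), integral_div, integral_sub hadd habs,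
          integral_add hf1 hf2, integral_fun_fst, integral_fun_snd]
        · simp only [probReal_univ, smul_eq_mul, one_mul, integral_const, one_div]
          ring
        · exact (hadd.sub habs).div_const 2

end LayerCake

theorem exists_linearIsometryEquiv_apply_eq {F : Type*} [NormedAddCommGroup F]
    [InnerProductSpace ℝ F] {u v : F} (h : ‖u‖ = ‖v‖) : ∃ e : F ≃ₗᵢ[ℝ] F, e u = v :=
  ⟨_, Submodule.reflection_sub h⟩

section Sphere

variable {d : ℕ}

local notation "E" => EuclideanSpace ℝ (Fin (d + 1))
local notation "σ" => sphereMeasure d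

instance : IsProbabilityMeasure σ := by
  have : NeZero (volume : Measure E).toSphere := ⟨Measure.toSphere_ne_zero _⟩
  unfold sphereMeasure
  infer_instance

theorem measurePreserving_sphereMeasure (e : E ≃ₗᵢ[ℝ] E) :
    MeasurePreserving e.sphereHomeomorph σ σ := by
  have h := e.measurePreserving_sphereHomeomorph e.measurePreserving
  refine ⟨h.measurable, ?_⟩
  rw [sphereMeasure, Measure.map_smul, h.map_eq]

theorem integral_comp_sphereHomeomorph (e : E ≃ₗᵢ[ℝ] E) (f : Sphere d → ℝ) :
    ∫ x, f (e.sphereHomeomorph x) ∂σ = ∫ x, f x ∂σ :=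
  (measurePreserving_sphereMeasure e).integral_comp e.sphereHomeomorph.measurableEmbedding f

theorem integral_prod_comp_sphereHomeomorph (e : E ≃ₗᵢ[ℝ] E) (f : Sphere d × Sphere d → ℝ) :
    ∫ z, f (e.sphereHomeomorph z.1, e.sphereHomeomorph z.2) ∂Measure.prod σ σ
      = ∫ z, f z ∂Measure.prod σ σ :=
  ((measurePreserving_sphereMeasure e).prod (measurePreserving_sphereMeasure e)).integral_comp
    (e.sphereHomeomorph.prodCongr e.sphereHomeomorph).measurableEmbedding f

theorem ip_mem_Icc (p x : Sphere d) : ip p x ∈ Icc (-1) 1 := by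
  have := abs_real_inner_le_norm (p : E) x
  simp only [norm_eq_of_mem_sphere, mul_one] at this
  exact abs_le.1 this

theorem integral_ip_eq_zero (p : Sphere d) : ∫ x, ip p x ∂σ = 0 := by
  have h := integral_comp_sphereHomeomorph (LinearIsometryEquiv.neg ℝ) (ip p)
  simp only [ip, LinearIsometryEquiv.coe_sphereHomeomorph_apply, LinearIsometryEquiv.coe_neg,
    inner_neg_right, integral_neg] at h ⊢
  linarith

theorem integral_abs_inner_eq_norm_mul (v : E) (q : Sphere d) :
    ∫ w, |⟪v, (w : E)⟫| ∂σ = ‖v‖ * ∫ w, |ip q w| ∂σ := by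
  obtain ⟨e, he⟩ := exists_linearIsometryEquiv_apply_eq (u := ‖v‖ • (q : E)) (v := v)
    (by simp [norm_smul])
  rw [← integral_comp_sphereHomeomorph e, ← integral_const_mul]
  congr 1 with w
  rw [LinearIsometryEquiv.coe_sphereHomeomorph_apply, ← he, e.inner_map_map, real_inner_smul_left,
    abs_mul, abs_norm, he, ip]

theorem integral_eucl_eq (y p : Sphere d) : ∫ x, eucl x y ∂σ = ∫ x, eucl x p ∂σ := by
  obtain ⟨e, he⟩ := exists_linearIsometryEquiv_apply_eq (u := (p : E)) (v := y) (by simp)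
  rw [← integral_comp_sphereHomeomorph e]
  simp [eucl, ← he, ← map_sub]

theorem integral_prod_eucl (p : Sphere d) :
    ∫ z, eucl z.1 z.2 ∂Measure.prod σ σ = ∫ x, eucl x p ∂σ := by
  have hint : Integrable (fun z : Sphere d × Sphere d => eucl z.1 z.2) (Measure.prod σ σ) :=
    (by unfold eucl; fun_prop : Continuous _).integrable_of_hasCompactSupport (.of_compactSpace _)
  calc ∫ z, eucl z.1 z.2 ∂Measure.prod σ σ = ∫ x, ∫ y, eucl y x ∂σ ∂σ := by
        rw [integral_prod _ hint]
        congr 1 with x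
        congr 1 with y
        exact norm_sub_rev _ _
    _ = ∫ x, ∫ y, eucl y p ∂σ ∂σ := by
        congr 1 with x
        exact integral_eucl_eq x p
    _ = ∫ x, eucl x p ∂σ := by simp

theorem integral_prod_abs_inner_sub_eq (r p : Sphere d) :
    ∫ z, |⟪(z.1 : E) - z.2, (r : E)⟫| ∂Measure.prod σ σ
      = ∫ z, |⟪(z.1 : E) - z.2, (p : E)⟫| ∂Measure.prod σ σ := by
  obtain ⟨e, he⟩ := exists_linearIsometryEquiv_apply_eq (u := (p : E)) (v := r) (by simp)
  rw [← integral_prod_comp_sphereHomeomorph e]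
  simp [← he, ← map_sub]

theorem integral_prod_abs_ip_sub (p q : Sphere d) :
    ∫ z, |ip p z.1 - ip p z.2| ∂Measure.prod σ σ = (∫ w, |ip q w| ∂σ) * ∫ x, eucl x p ∂σ := by
  set G : Sphere d → Sphere d × Sphere d → ℝ := fun r z => |⟪(z.1 : E) - z.2, (r : E)⟫|
  have hG : Integrable (Function.uncurry G) (Measure.prod σ (Measure.prod σ σ)) :=
    (by fun_prop : Continuous (Function.uncurry G)).integrable_of_hasCompactSupport
      (.of_compactSpace _)
  calc ∫ z, |ip p z.1 - ip p z.2| ∂Measure.prod σ σ = ∫ z, G p z ∂Measure.prod σ σ := by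
        simp [G, ip, inner_sub_left, real_inner_comm]
    _ = ∫ r, ∫ z, G r z ∂Measure.prod σ σ ∂σ := by
        simp [G, integral_prod_abs_inner_sub_eq _ p]
    _ = ∫ z, ∫ r, G r z ∂σ ∂Measure.prod σ σ := integral_integral_swap hG
    _ = ∫ z, eucl z.1 z.2 * ∫ w, |ip q w| ∂σ ∂Measure.prod σ σ := by
        congr 1 with z
        exact integral_abs_inner_eq_norm_mul _ q
    _ = (∫ w, |ip q w| ∂σ) * ∫ x, eucl x p ∂σ := by
        rw [integral_mul_const, integral_prod_eucl p, mul_comm]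

end Sphere

theorem cap_quadratic_mean_general (d : ℕ) (p q : Sphere d) :
    (∫ t in (-1 : ℝ)..1, ((sphereMeasure d (cap p t)).toReal) ^ 2)
      = 1 - (1 / 2 * ∫ w, |ip q w| ∂(sphereMeasure d)) * ∫ x, eucl x p ∂(sphereMeasure d) := by
  have hip : Measurable (ip p) := by unfold ip; fun_prop
  change ∫ t in (-1 : ℝ)..1, (sphereMeasure d).real {x | t < ip p x} ^ 2 = _
  rw [integral_measureReal_setOf_lt_sq hip (by norm_num) (ip_mem_Icc p), integral_ip_eq_zero,
    integral_prod_abs_ip_sub p q]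
  ring

/-- The mean square (over heights `t ∈ [-1,1]`) of the measure of the spherical cap `C(p,t)`
equals `1 - C_d ∫_{S^d} ‖x - p‖ dσ(x)`, where
`C_d = (1/2) ∫_{S^d} |q·w| dσ(w)` (for any fixed `q ∈ S^d`). -/
theorem cap_quadratic_mean (d : ℕ) (hd : 1 ≤ d) (p q : Sphere d) :
    (∫ t in (-1 : ℝ)..1, ((sphereMeasure d (cap p t)).toReal) ^ 2)
      = 1 - (1 / 2 * ∫ w, |ip q w| ∂(sphereMeasure d)) * ∫ x, eucl x p ∂(sphereMeasure d) :=
  cap_quadratic_mean_general d p q
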